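/- Let Φ be a crystallographic root system for a finite real reflection group W (i.e., 2⟨α,β⟩/⟨α,α⟩ ∈ ℤ for all α, β ∈ Φ) whose span has dimension at least 3, and fix a circuit C ⊆ Φ. If two m-dependences (C⃗, c⃗) and (C⃗′, c⃗′), each with pairwise distinct entries and with underlying set of entries equal to C, lie in the same Hurwitz orbit under the lifted Hurwitz moves, then wt(c⃗′) = wt(c⃗). -/

import Mathlib

open scoped RealInnerProductSpace

variable {V : Type*} [NormedAddCommGroup V] [InnerProductSpace ℝ V] [FiniteDimensional ℝ V]

/-- The orthogonal reflection in the hyperplane `α^⊥`. -/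
noncomputable def reflAlong (α : V) : V ≃ₗᵢ[ℝ] V :=
  Submodule.reflection ((Submodule.span ℝ {α})ᗮ)

/-- An orthogonal reflection: the reflection through the hyperplane orthogonal to some
nonzero vector. -/
def IsReflection (g : V ≃ₗᵢ[ℝ] V) : Prop :=
  ∃ α : V, α ≠ 0 ∧ g = reflAlong α

/-- A finite real reflection group: a finite subgroup of the orthogonal group generated by its
reflections and fixing no nonzero vector. -/
def IsReflectionGroup (W : Subgroup (V ≃ₗᵢ[ℝ] V)) : Prop :=
  (W : Set (V ≃ₗᵢ[ℝ] V)).Finite ∧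
    Subgroup.closure {g | g ∈ W ∧ IsReflection g} = W ∧
    ∀ v : V, (∀ g ∈ W, g v = v) → v = 0
/-- A root system for `W`: a finite `W`-stable set of nonzero vectors, containing exactly two
opposite normal vectors for each reflecting hyperplane of a reflection of `W`. -/
def IsRootSystem (W : Subgroup (V ≃ₗᵢ[ℝ] V)) (Φ : Set V) : Prop :=
  Φ.Finite ∧
    (∀ g ∈ W, ∀ α ∈ Φ, g α ∈ Φ) ∧
    (∀ α ∈ Φ, α ≠ 0 ∧ reflAlong α ∈ W) ∧
    (∀ α ∈ Φ, {x | x ∈ Φ ∧ ∃ r : ℝ, x = r • α} = {α, -α}) ∧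
    (∀ g ∈ W, IsReflection g → ∃ α ∈ Φ, g = reflAlong α)
/-- A circuit: a finite linearly dependent set of vectors, every proper subset of which is
linearly independent. -/
def IsCircuit {V' : Type*} [AddCommGroup V'] [Module ℝ V'] (C : Set V') : Prop :=
  C.Finite ∧ ¬ LinearIndependent ℝ (fun x : C => (x : V')) ∧
    ∀ D : Set V', D ⊂ C → LinearIndependent ℝ (fun x : D => (x : V'))

/-- The weight of a coefficient vector: the sum of absolute values of its entries. -/
noncomputable def wtFn {m : ℕ} (c : Fin m → ℝ) : ℝ := ∑ i, |c i|

/-- The lifted Hurwitz move on `m`-dependences: `σ_i` replaces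
`(α_i, α_{i+1})` by `(α_{i+1}, s_{α_{i+1}}(α_i))` and `(c_i, c_{i+1})` by
`(c_{i+1} + (2⟪α_i, α_{i+1}⟫/⟪α_{i+1}, α_{i+1}⟫)·c_i, c_i)`. -/
noncomputable def DepMove {m : ℕ} (p q : (Fin m → V) × (Fin m → ℝ)) : Prop :=
  ∃ (i : Fin m) (h : (i : ℕ) + 1 < m),
    q.1 i = p.1 ⟨(i : ℕ) + 1, h⟩ ∧
    q.1 ⟨(i : ℕ) + 1, h⟩ = reflAlong (p.1 ⟨(i : ℕ) + 1, h⟩) (p.1 i) ∧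
    q.2 i = p.2 ⟨(i : ℕ) + 1, h⟩ +
      2 * ⟪p.1 i, p.1 ⟨(i : ℕ) + 1, h⟩⟫ / ⟪p.1 ⟨(i : ℕ) + 1, h⟩, p.1 ⟨(i : ℕ) + 1, h⟩⟫ * p.2 i ∧
    q.2 ⟨(i : ℕ) + 1, h⟩ = p.2 i ∧
    ∀ j : Fin m, j ≠ i → j ≠ ⟨(i : ℕ) + 1, h⟩ → q.1 j = p.1 j ∧ q.2 j = p.2 j

/-- Two `m`-dependences lie in the same Hurwitz orbit when they are related by a finite
sequence of lifted Hurwitz moves and their inverses. -/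
noncomputable def SameDepOrbit {m : ℕ} (p q : (Fin m → V) × (Fin m → ℝ)) : Prop :=
  Relation.EqvGen DepMove p q

/-!
A lifted Hurwitz move replaces the coefficient pair `(c_i, c_{i+1})` by
`(c_{i+1} + z c_i, c_i)` with `z` an entry of the Cartan matrix, an integer in the
crystallographic case; hence the subgroup of `ℝ` generated by the coefficients is an orbit
invariant. Since the Cartan matrix is integral and its real kernel consists exactly of the
dependences, a circuit of roots carries an integral dependence `n`, and every dependence on
the circuit is a real multiple `t • n`. The subgroup generated by the coefficients of `t • n`
is `ℤ t g` with `g ≠ 0` a generator of the subgroup of `ℤ` generated by the `n j`, so it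
determines `|t|`, and so does the weight `|t| ∑ |n j|`.
-/

open Set

section RootSystem

variable {E : Type*} [NormedAddCommGroup E] [InnerProductSpace ℝ E]
  {W : Subgroup (E ≃ₗᵢ[ℝ] E)} {Φ : Set E}

theorem IsRootSystem.ne_zero (hΦ : IsRootSystem W Φ) {α : E} (hα : α ∈ Φ) : α ≠ 0 :=
  (hΦ.2.2.1 α hα).1

theorem IsRootSystem.reflAlong_mem (hΦ : IsRootSystem W Φ) {α β : E} (hα : α ∈ Φ) (hβ : β ∈ Φ) :
    reflAlong α β ∈ Φ :=
  hΦ.2.1 _ (hΦ.2.2.1 α hα).2 β hβ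

end RootSystem

theorem wtFn_smul {m : ℕ} (t : ℝ) (c : Fin m → ℝ) : wtFn (t • c) = |t| * wtFn c := by
  simp [wtFn, abs_mul, Finset.mul_sum]

theorem wtFn_comp_equiv {m : ℕ} (c : Fin m → ℝ) (σ : Fin m ≃ Fin m) : wtFn (c ∘ σ) = wtFn c :=
  σ.sum_comp fun j => |c j|

theorem abs_eq_abs_of_zmultiples_eq {a b : ℝ}
    (h : AddSubgroup.zmultiples a = AddSubgroup.zmultiples b) : |a| = |b| := by
  rcases eq_or_ne a 0 with rfl | ha
  · rw [AddSubgroup.zmultiples_zero_eq_bot, eq_comm, AddSubgroup.zmultiples_eq_bot] at h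
    rw [h]
  · rcases (AddSubgroup.zmultiples_eq_zmultiples_iff
      (not_isOfFinAddOrder_of_isAddTorsionFree ha)).mp h with rfl | rfl
    · rfl
    · exact (abs_neg a).symm

theorem abs_eq_abs_of_closure_range_smul_eq {ι : Type*} {n : ι → ℤ} (hn : n ≠ 0) {t t' : ℝ}
    (h : AddSubgroup.closure (range (t • fun j => (n j : ℝ))) =
      AddSubgroup.closure (range (t' • fun j => (n j : ℝ)))) : |t| = |t'| := by
  obtain ⟨g, hg⟩ := Int.subgroup_cyclic (AddSubgroup.closure (range n))
  have hg0 : g ≠ 0 := by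
    rintro rfl
    refine hn (funext fun j => ?_)
    have hj : n j ∈ AddSubgroup.closure (range n) := AddSubgroup.subset_closure (mem_range_self j)
    rwa [hg, AddSubgroup.closure_singleton_zero, AddSubgroup.mem_bot] at hj
  have hclosure : ∀ s : ℝ, AddSubgroup.closure (range (s • fun j => (n j : ℝ))) =
      AddSubgroup.zmultiples (s * g) := by
    intro s
    let f : ℤ →+ ℝ := (AddMonoidHom.mulLeft s).comp (Int.castAddHom ℝ)
    calc AddSubgroup.closure (range (s • fun j => (n j : ℝ)))
        = (AddSubgroup.closure (range n)).map f := by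
          rw [AddMonoidHom.map_closure, ← range_comp]; rfl
      _ = AddSubgroup.zmultiples (s * g) := by
          rw [hg, AddMonoidHom.map_closure, image_singleton,
            ← AddSubgroup.zmultiples_eq_closure]; rfl
  rw [hclosure, hclosure] at h
  have := abs_eq_abs_of_zmultiples_eq h
  rwa [abs_mul, abs_mul, mul_left_inj' (abs_ne_zero.mpr (Int.cast_ne_zero.mpr hg0))] at this

section Circuit

variable {M : Type*} [AddCommGroup M] [Module ℝ M] {ι : Type*} {β : ι → M}

theorem IsCircuit.not_linearIndependent (hβ : Function.Injective β)
    (hC : IsCircuit (range β)) : ¬ LinearIndependent ℝ β :=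
  fun h => hC.2.1 ((linearIndepOn_id_range_iff hβ).mpr h)

variable [Fintype ι]

theorem IsCircuit.eq_zero_of_sum_smul_eq_zero (hβ : Function.Injective β)
    (hC : IsCircuit (range β)) {x : ι → ℝ} (hx : ∑ j, x j • β j = 0) {j₀ : ι} (hj₀ : x j₀ = 0) :
    x = 0 := by
  classical
  have hsub : β '' ↑(Finset.univ.erase j₀) ⊂ range β := by
    refine (image_subset_range _ _).ssubset_of_not_subset fun h => ?_
    obtain ⟨j, hj, hjj₀⟩ := h (mem_range_self j₀)
    exact (Finset.mem_erase.mp hj).1 (hβ hjj₀)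
  have hindep : LinearIndepOn ℝ β ↑(Finset.univ.erase j₀) :=
    (linearIndepOn_iff_image hβ.injOn).mpr (hC.2.2 _ hsub)
  have hx' : ∑ j ∈ Finset.univ.erase j₀, x j • β j = 0 := by
    rwa [Finset.sum_erase _ (by rw [hj₀, zero_smul])]
  funext j
  by_cases hj : j = j₀
  · rwa [hj]
  · exact linearIndepOn_finset_iff.mp hindep x hx' j
      (Finset.mem_erase.mpr ⟨hj, Finset.mem_univ j⟩)

theorem IsCircuit.exists_eq_smul_of_sum_smul_eq_zero (hβ : Function.Injective β)
    (hC : IsCircuit (range β)) {x u : ι → ℝ} (hx : ∑ j, x j • β j = 0)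
    (hu : ∑ j, u j • β j = 0) {j₀ : ι} (hj₀ : u j₀ ≠ 0) : ∃ t : ℝ, x = t • u := by
  refine ⟨x j₀ / u j₀, sub_eq_zero.mp (hC.eq_zero_of_sum_smul_eq_zero hβ ?_ (j₀ := j₀) ?_)⟩
  · simp only [Pi.sub_apply, Pi.smul_apply, smul_eq_mul, sub_smul, mul_smul,
      Finset.sum_sub_distrib, ← Finset.smul_sum, hx, hu, smul_zero, sub_zero]
  · simp [div_mul_cancel₀ _ hj₀]

end Circuit

section Crystallographic

open scoped Matrix

variable {E : Type*} [NormedAddCommGroup E] [InnerProductSpace ℝ E]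
  {ι : Type*} [Fintype ι]

noncomputable def cartanMatrix (β : ι → E) : Matrix ι ι ℝ :=
  Matrix.of fun j l => 2 * ⟪β j, β l⟫ / ⟪β j, β j⟫

theorem cartanMatrix_mulVec_apply (β : ι → E) (y : ι → ℝ) (j : ι) :
    (cartanMatrix β *ᵥ y) j = 2 / ⟪β j, β j⟫ * ⟪β j, ∑ l, y l • β l⟫ := by
  simp only [cartanMatrix, Matrix.mulVec, dotProduct, Matrix.of_apply, inner_sum,
    real_inner_smul_right, Finset.mul_sum]
  exact Finset.sum_congr rfl fun l _ => by ring

theorem cartanMatrix_mulVec_eq_zero_iff {β : ι → E} (hβ : ∀ j, β j ≠ 0) (y : ι → ℝ) :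
    cartanMatrix β *ᵥ y = 0 ↔ ∑ l, y l • β l = 0 := by
  constructor
  · intro h
    have horth : ∀ j, ⟪β j, ∑ l, y l • β l⟫ = 0 := fun j => by
      have hj := congrFun h j
      rw [cartanMatrix_mulVec_apply, Pi.zero_apply, mul_eq_zero] at hj
      exact hj.resolve_left (div_ne_zero two_ne_zero (inner_self_ne_zero.mpr (hβ j)))
    refine (inner_self_eq_zero (𝕜 := ℝ)).mp ?_
    rw [sum_inner]
    simp [real_inner_smul_left, horth]
  · intro h
    funext j
    rw [cartanMatrix_mulVec_apply, h, inner_zero_right, mul_zero, Pi.zero_apply]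

theorem exists_int_sum_smul_eq_zero [DecidableEq ι] {β : ι → E} (hβ : ∀ j, β j ≠ 0)
    (hcrys : ∀ j l, ∃ z : ℤ, 2 * ⟪β j, β l⟫ / ⟪β j, β j⟫ = z)
    (hdep : ¬ LinearIndependent ℝ β) :
    ∃ n : ι → ℤ, n ≠ 0 ∧ ∑ j, (n j : ℝ) • β j = 0 := by
  choose z hz using hcrys
  have hcartan : cartanMatrix β = (Int.castRingHom ℝ).mapMatrix (Matrix.of z) :=
    Matrix.ext hz
  obtain ⟨y, hy, j₀, hj₀⟩ := Fintype.not_linearIndependent_iff.mp hdep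
  have hdetℝ : (cartanMatrix β).det = 0 :=
    Matrix.exists_mulVec_eq_zero_iff.mp
      ⟨y, fun h => hj₀ (congrFun h j₀), (cartanMatrix_mulVec_eq_zero_iff hβ y).mpr hy⟩
  have hdet : (Matrix.of z).det = 0 := by
    rw [hcartan, ← RingHom.map_det] at hdetℝ
    exact Int.cast_eq_zero.mp hdetℝ
  obtain ⟨n, hn, hzn⟩ := Matrix.exists_mulVec_eq_zero_iff.mpr hdet
  refine ⟨n, hn, (cartanMatrix_mulVec_eq_zero_iff hβ _).mp (funext fun j => ?_)⟩
  have hj := RingHom.map_mulVec (Int.castRingHom ℝ) (Matrix.of z) n j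
  rw [hzn, Pi.zero_apply, map_zero] at hj
  rw [hcartan, RingHom.mapMatrix_apply]
  exact hj.symm

end Crystallographic

section Hurwitz

variable {E : Type*} [NormedAddCommGroup E] [InnerProductSpace ℝ E]
  {Φ : Set E} {m : ℕ} {p q : (Fin m → E) × (Fin m → ℝ)}

theorem DepMove.forall_mem_iff (hΦ : ∀ α ∈ Φ, ∀ β ∈ Φ, reflAlong α β ∈ Φ)
    (h : DepMove p q) : (∀ j, p.1 j ∈ Φ) ↔ ∀ j, q.1 j ∈ Φ := by
  obtain ⟨i, hi, hq_i, hq_succ, -, -, hq_rest⟩ := h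
  set i' : Fin m := ⟨i + 1, hi⟩
  have hp_i : p.1 i = reflAlong (q.1 i) (q.1 i') := by
    rw [hq_i, hq_succ]
    exact (Submodule.reflection_involutive _ (p.1 i)).symm
  constructor
  · intro hp j
    by_cases hji : j = i
    · rw [hji, hq_i]; exact hp i'
    by_cases hji' : j = i'
    · rw [hji', hq_succ]; exact hΦ _ (hp i') _ (hp i)
    · rw [(hq_rest j hji hji').1]; exact hp j
  · intro hq j
    by_cases hji : j = i
    · rw [hji, hp_i]; exact hΦ _ (hq i) _ (hq i')
    by_cases hji' : j = i'
    · rw [hji', ← hq_i]; exact hq i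
    · rw [← (hq_rest j hji hji').1]; exact hq j

theorem DepMove.closure_range_snd_eq
    (hcrys : ∀ β ∈ Φ, ∀ γ ∈ Φ, ∃ z : ℤ, 2 * ⟪β, γ⟫ / ⟪β, β⟫ = z)
    (hp : ∀ j, p.1 j ∈ Φ) (h : DepMove p q) :
    AddSubgroup.closure (range p.2) = AddSubgroup.closure (range q.2) := by
  obtain ⟨i, hi, -, -, hq_i, hq_succ, hq_rest⟩ := h
  set i' : Fin m := ⟨i + 1, hi⟩
  obtain ⟨z, hz⟩ := hcrys _ (hp i') _ (hp i)
  replace hq_i : q.2 i = p.2 i' + z * p.2 i := by rw [hq_i, real_inner_comm, hz]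
  have mem : ∀ (r : Fin m → ℝ) j, r j ∈ AddSubgroup.closure (range r) :=
    fun r j => AddSubgroup.subset_closure (mem_range_self j)
  apply le_antisymm <;> rw [AddSubgroup.closure_le] <;> rintro - ⟨j, rfl⟩
  · by_cases hji : j = i
    · rw [hji, ← hq_succ]; exact mem _ i'
    by_cases hji' : j = i'
    · rw [hji', show p.2 i' = q.2 i - z • q.2 i' by rw [hq_i, hq_succ, zsmul_eq_mul]; ring]
      exact sub_mem (mem _ i) (zsmul_mem (mem _ i') z)
    · rw [← (hq_rest j hji hji').2]; exact mem _ j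
  · by_cases hji : j = i
    · rw [hji, hq_i, ← zsmul_eq_mul]; exact add_mem (mem _ i') (zsmul_mem (mem _ i) z)
    by_cases hji' : j = i'
    · rw [hji', hq_succ]; exact mem _ i
    · rw [(hq_rest j hji hji').2]; exact mem _ j

theorem SameDepOrbit.forall_mem_iff (hΦ : ∀ α ∈ Φ, ∀ β ∈ Φ, reflAlong α β ∈ Φ)
    (h : SameDepOrbit p q) : (∀ j, p.1 j ∈ Φ) ↔ ∀ j, q.1 j ∈ Φ := by
  induction h with
  | rel _ _ h => exact h.forall_mem_iff hΦ
  | refl => rfl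
  | symm _ _ _ ih => exact ih.symm
  | trans _ _ _ _ _ ih₁ ih₂ => exact ih₁.trans ih₂

theorem SameDepOrbit.closure_range_snd_eq (hΦ : ∀ α ∈ Φ, ∀ β ∈ Φ, reflAlong α β ∈ Φ)
    (hcrys : ∀ β ∈ Φ, ∀ γ ∈ Φ, ∃ z : ℤ, 2 * ⟪β, γ⟫ / ⟪β, β⟫ = z)
    (hp : ∀ j, p.1 j ∈ Φ) (h : SameDepOrbit p q) :
    AddSubgroup.closure (range p.2) = AddSubgroup.closure (range q.2) := by
  induction h with
  | rel _ _ h => exact h.closure_range_snd_eq hcrys hp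
  | refl => rfl
  | symm _ _ h ih => exact (ih ((SameDepOrbit.forall_mem_iff hΦ h).mpr hp)).symm
  | trans _ _ _ h _ ih₁ ih₂ =>
    exact (ih₁ hp).trans (ih₂ ((SameDepOrbit.forall_mem_iff hΦ h).mp hp))

end Hurwitz

theorem stmt12_general (W : Subgroup (V ≃ₗᵢ[ℝ] V))
    (Φ : Set V) (hΦ : IsRootSystem W Φ)
    (hcrys : ∀ β ∈ Φ, ∀ γ ∈ Φ, ∃ z : ℤ, 2 * ⟪β, γ⟫ / ⟪β, β⟫ = (z : ℝ))
    (C : Set V) (hC : C ⊆ Φ) (hcirc : IsCircuit C)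
    (m : ℕ) (α α' : Fin m → V) (c c' : Fin m → ℝ)
    (hinj : Function.Injective α) (hinj' : Function.Injective α')
    (hrange : Set.range α = C) (hrange' : Set.range α' = C)
    (hdep : ∑ j, c j • α j = 0) (hdep' : ∑ j, c' j • α' j = 0)
    (horb : SameDepOrbit (α, c) (α', c')) :
    wtFn c' = wtFn c := by
  subst hrange
  have hαΦ : ∀ j, α j ∈ Φ := fun j => hC (mem_range_self j)
  let σ : Fin m ≃ Fin m := (Equiv.ofInjective α' hinj').trans
    ((Equiv.setCongr hrange').trans (Equiv.ofInjective α hinj).symm)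
  have hσ : ∀ j, α (σ j) = α' j := fun j => Equiv.apply_ofInjective_symm hinj _
  obtain ⟨n, hn, hnα⟩ := exists_int_sum_smul_eq_zero (fun j => hΦ.ne_zero (hαΦ j))
    (fun j l => hcrys _ (hαΦ j) _ (hαΦ l)) (hcirc.not_linearIndependent hinj)
  obtain ⟨j₀, hj₀⟩ := Function.ne_iff.mp hn
  have hj₀' : (n j₀ : ℝ) ≠ 0 := Int.cast_ne_zero.mpr hj₀
  obtain ⟨t, rfl⟩ := hcirc.exists_eq_smul_of_sum_smul_eq_zero hinj hdep hnα hj₀'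
  have hdepσ : ∑ j, (c' ∘ σ.symm) j • α j = 0 := by
    rw [← σ.sum_comp, ← hdep']
    simp [hσ]
  obtain ⟨t', ht'⟩ := hcirc.exists_eq_smul_of_sum_smul_eq_zero hinj hdepσ hnα hj₀'
  have hcl := horb.closure_range_snd_eq (fun _ hβ _ hγ => hΦ.reflAlong_mem hβ hγ) hcrys hαΦ
  have hrange_c' : range (c' ∘ σ.symm) = range c' := σ.symm.surjective.range_comp c'
  have habs : |t| = |t'| := by
    refine abs_eq_abs_of_closure_range_smul_eq hn ?_
    rw [← ht', hrange_c']
    exact hcl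
  calc wtFn c' = wtFn (c' ∘ σ.symm) := (wtFn_comp_equiv c' σ.symm).symm
    _ = wtFn (t • fun j => (n j : ℝ)) := by rw [ht', wtFn_smul, wtFn_smul, habs]

/-- In a crystallographic root system of rank at least `3`, two `m`-dependences supported on
the same fixed circuit and lying in the same Hurwitz orbit have equal weight. -/
theorem stmt12 (W : Subgroup (V ≃ₗᵢ[ℝ] V)) (hW : IsReflectionGroup W)
    (Φ : Set V) (hΦ : IsRootSystem W Φ)
    (hcrys : ∀ β ∈ Φ, ∀ γ ∈ Φ, ∃ z : ℤ, 2 * ⟪β, γ⟫ / ⟪β, β⟫ = (z : ℝ))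
    (hrank : 3 ≤ Module.finrank ℝ (Submodule.span ℝ Φ))
    (C : Set V) (hC : C ⊆ Φ) (hcirc : IsCircuit C)
    (m : ℕ) (α α' : Fin m → V) (c c' : Fin m → ℝ)
    (hinj : Function.Injective α) (hinj' : Function.Injective α')
    (hrange : Set.range α = C) (hrange' : Set.range α' = C)
    (hdep : ∑ j, c j • α j = 0) (hdep' : ∑ j, c' j • α' j = 0)
    (horb : SameDepOrbit (α, c) (α', c')) :
    wtFn c' = wtFn c :=
  stmt12_general W Φ hΦ hcrys C hC hcirc m α α' c c' hinj hinj' hrange hrange' hdep hdep' horb
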